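/- arXiv:2011.12656 — 6 statements merged into one kernel-verified Lean document; each statement's English description precedes it below -/
import Mathlib

section
/- Let Λ be a row-finite, locally convex k-graph and let H ⊆ Λ⁰. Then H is saturated (i.e., for every vertex v, if there exists i ∈ {1,…,k} with s(vΛ^{≤ e_i}) ⊆ H then v ∈ H) if and only if for every v ∈ Λ⁰ with v ∉ H and every n ∈ ℕ^k, the set s(vΛ^{≤ n}) is not contained in H. -/
open scoped Classical

/-- A `k`-graph: a countable category with degree functor into `ℕ^k` satisfying the
unique factorisation property.  Composition `comp p q` is only meaningful when
`src p = rng q` (junk otherwise). -/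
structure KGraph (k : ℕ) where
  Path : Type
  [countablePath : Countable Path]
  src : Path → Path
  rng : Path → Path
  deg : Path → Fin k → ℕ
  comp : Path → Path → Path
  src_src : ∀ p, src (src p) = src p
  rng_src : ∀ p, rng (src p) = src p
  src_rng : ∀ p, src (rng p) = rng p
  rng_rng : ∀ p, rng (rng p) = rng p
  deg_src : ∀ p, deg (src p) = 0
  deg_rng : ∀ p, deg (rng p) = 0
  src_of_vertex : ∀ p, deg p = 0 → src p = p
  src_comp : ∀ p q, src p = rng q → src (comp p q) = src q
  rng_comp : ∀ p q, src p = rng q → rng (comp p q) = rng p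
  deg_comp : ∀ p q, src p = rng q → deg (comp p q) = deg p + deg q
  comp_id : ∀ p, comp p (src p) = p
  id_comp : ∀ p, comp (rng p) p = p
  comp_assoc : ∀ p q r, src p = rng q → src q = rng r →
    comp (comp p q) r = comp p (comp q r)
  factor_exists : ∀ lam (m n : Fin k → ℕ), deg lam = m + n →
    ∃ p q, src p = rng q ∧ deg p = m ∧ deg q = n ∧ comp p q = lam
  factor_unique : ∀ p q p' q', src p = rng q → src p' = rng q' →
    deg p = deg p' → deg q = deg q' → comp p q = comp p' q' →
    p = p' ∧ q = q'

namespace KGraph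

variable {k : ℕ} (Λ : KGraph k)

/-- `v` is a vertex (identity morphism). -/
def IsVertex (v : Λ.Path) : Prop := Λ.deg v = 0

/-- `v Λ^{e_i} ≠ ∅`. -/
def HasOut (v : Λ.Path) (i : Fin k) : Prop :=
  ∃ f, Λ.rng f = v ∧ Λ.deg f = Pi.single i 1

/-- `lam ∈ v Λ^{≤ n}`. -/
def InLe (v : Λ.Path) (n : Fin k → ℕ) (lam : Λ.Path) : Prop :=
  Λ.rng lam = v ∧ Λ.deg lam ≤ n ∧
    ∀ i, Λ.deg lam + Pi.single i 1 ≤ n → ¬ Λ.HasOut (Λ.src lam) i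

/-- `Λ` is row-finite. -/
def RowFinite : Prop := ∀ v n, {lam | Λ.rng lam = v ∧ Λ.deg lam = n}.Finite

/-- `Λ` is finite: each `Λ^n` is finite. -/
def FinitePaths : Prop := ∀ n, {lam | Λ.deg lam = n}.Finite

/-- `Λ` is locally convex. -/
def LocallyConvex : Prop :=
  ∀ i j : Fin k, i ≠ j → ∀ lam mu, Λ.deg lam = Pi.single i 1 →
    Λ.deg mu = Pi.single j 1 → Λ.rng lam = Λ.rng mu →
    Λ.HasOut (Λ.src lam) j ∧ Λ.HasOut (Λ.src mu) i

/-- Split `lam` as a pair of paths of degrees `m` and `deg lam - m` (junk if `¬ m ≤ deg lam`). -/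
noncomputable def split (lam : Λ.Path) (m : Fin k → ℕ) : Λ.Path × Λ.Path :=
  if h : m ≤ Λ.deg lam then
    have hd : Λ.deg lam = m + (Λ.deg lam - m) := by
      funext i
      have hi : m i ≤ Λ.deg lam i := h i
      simp only [Pi.add_apply, Pi.sub_apply]
      omega
    ((Λ.factor_exists lam m (Λ.deg lam - m) hd).choose,
     (Λ.factor_exists lam m (Λ.deg lam - m) hd).choose_spec.choose)
  else (lam, lam)

/-- `lam(0, m)`. -/
noncomputable def front (lam : Λ.Path) (m : Fin k → ℕ) : Λ.Path := (Λ.split lam m).1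

/-- `lam(m, d(lam))`. -/
noncomputable def back (lam : Λ.Path) (m : Fin k → ℕ) : Λ.Path := (Λ.split lam m).2

/-- `lam(m)`, the vertex of `lam` at position `m`. -/
noncomputable def vertexAt (lam : Λ.Path) (m : Fin k → ℕ) : Λ.Path := Λ.rng (Λ.back lam m)

/-- A cycle: a non-vertex path with equal range and source. -/
def IsCycle (lam : Λ.Path) : Prop := Λ.deg lam ≠ 0 ∧ Λ.rng lam = Λ.src lam

/-- `lam^n` for a cycle `lam`. -/
noncomputable def cpow (lam : Λ.Path) : ℕ → Λ.Path
  | 0 => Λ.rng lam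
  | n + 1 => Λ.comp lam (cpow lam n)

/-- `m ≤ d(lam^∞)`. -/
def LeInfDeg (lam : Λ.Path) (m : Fin k → ℕ) : Prop := ∀ i, Λ.deg lam i = 0 → m i = 0

/-- The initial segment `lam^∞(0, m)` of the infinite path obtained by repeating `lam`. -/
noncomputable def infSeg (lam : Λ.Path) (m : Fin k → ℕ) : Λ.Path :=
  Λ.front (Λ.cpow lam (Finset.univ.sup m + 1)) m

/-- The vertex `lam^∞(m)`. -/
noncomputable def infVertexAt (lam : Λ.Path) (m : Fin k → ℕ) : Λ.Path :=
  Λ.vertexAt (Λ.cpow lam (Finset.univ.sup m + 1)) m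

/-- `lam` is a cycle with an entrance. -/
def HasEntrance (lam : Λ.Path) : Prop :=
  ∃ τ, Λ.rng τ = Λ.rng lam ∧ Λ.LeInfDeg lam (Λ.deg τ) ∧ τ ≠ Λ.infSeg lam (Λ.deg τ)

/-- `Λ` has no cycle with an entrance. -/
def NoCycleWithEntrance : Prop := ¬ ∃ lam, Λ.IsCycle lam ∧ Λ.HasEntrance lam

/-- An initial cycle. -/
def IsInitialCycle (mu : Λ.Path) : Prop :=
  Λ.rng mu = Λ.src mu ∧ ∀ i, Λ.deg mu i = 0 → ¬ Λ.HasOut (Λ.rng mu) i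

/-- `v` is a vertex on the (initial) cycle `mu`. -/
def OnCycle (mu v : Λ.Path) : Prop := ∃ p, p ≤ Λ.deg mu ∧ v = Λ.vertexAt mu p

/-- `lam` extends `mu`, i.e. `lam = mu a` for some path `a`. -/
def Extends (lam mu : Λ.Path) : Prop :=
  ∃ a, Λ.src mu = Λ.rng a ∧ Λ.comp mu a = lam

/-- `lam` is a minimal common extension of `mu` and `nu`. -/
def MCE (mu nu lam : Λ.Path) : Prop :=
  Λ.Extends lam mu ∧ Λ.Extends lam nu ∧ Λ.deg lam = Λ.deg mu ⊔ Λ.deg nu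

/-- `H` is hereditary. -/
def Hereditary (H : Set Λ.Path) : Prop := ∀ lam, Λ.rng lam ∈ H → Λ.src lam ∈ H

/-- `H` is saturated. -/
def Saturated (H : Set Λ.Path) : Prop :=
  ∀ v, Λ.IsVertex v →
    (∃ i : Fin k, ∀ lam, Λ.InLe v (Pi.single i 1) lam → Λ.src lam ∈ H) → v ∈ H

/-- `Λ` is cofinal. -/
def Cofinal : Prop :=
  ∀ v w, Λ.IsVertex v → Λ.IsVertex w → ∃ n : Fin k → ℕ,
    ∀ lam, Λ.InLe w n lam → ∃ mu, Λ.rng mu = v ∧ Λ.src mu = Λ.src lam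

end KGraph

/-- For a row-finite, locally convex k-graph, `H ⊆ Λ⁰` is saturated iff for every
vertex `v ∉ H` and every `n ∈ ℕ^k`, `s(vΛ^{≤n}) ⊄ H`. -/
theorem saturated_iff {k : ℕ} (Λ : KGraph k) (hrf : Λ.RowFinite) (hlc : Λ.LocallyConvex)
    (H : Set Λ.Path) (hH : ∀ v ∈ H, Λ.IsVertex v) :
    Λ.Saturated H ↔
      ∀ v, Λ.IsVertex v → v ∉ H → ∀ n : Fin k → ℕ,
        ¬ (∀ lam, Λ.InLe v n lam → Λ.src lam ∈ H) := by
  constructor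
  · intro hsat
    suffices h : ∀ N : ℕ, ∀ v, Λ.IsVertex v → v ∉ H → ∀ n : Fin k → ℕ, (∑ i, n i) = N →
        ∃ lam, Λ.InLe v n lam ∧ Λ.src lam ∉ H by
      intro v hv hvH n hall
      obtain ⟨lam, h1, h2⟩ := h (∑ i, n i) v hv hvH n rfl
      exact h2 (hall lam h1)
    intro N
    induction N using Nat.strong_induction_on with
    | _ N ih =>
      intro v hv hvH n hn
      have hrngv : Λ.rng v = v := by
        rw [← Λ.src_of_vertex v hv, Λ.rng_src, Λ.src_of_vertex v hv]
      by_cases hI : ∃ i, 1 ≤ n i ∧ Λ.HasOut v i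
      · obtain ⟨i, hni, hout⟩ := hI
        have hlam : ¬ ∀ lam, Λ.InLe v (Pi.single i 1) lam → Λ.src lam ∈ H := by
          intro hcon
          exact hvH (hsat v hv ⟨i, hcon⟩)
        push_neg at hlam
        obtain ⟨lam, hlamIn, hlamH⟩ := hlam
        obtain ⟨hr, hle, hmax⟩ := hlamIn
        have hdeg : Λ.deg lam = Pi.single i 1 := by
          by_contra hne
          have h0 : Λ.deg lam = 0 := by
            have hi1 : Λ.deg lam i = 0 := by
              by_contra hdi
              apply hne
              funext l
              have hl := hle l
              by_cases hli : l = i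
              · subst hli
                simp only [Pi.single_eq_same] at hl ⊢
                omega
              · simp only [Pi.single_eq_of_ne hli] at hl ⊢
                omega
            funext l
            have hl := hle l
            by_cases hli : l = i
            · subst hli; simpa using hi1
            · simp only [Pi.single_eq_of_ne hli] at hl
              simpa using hl
          have hlamv : lam = v := by
            rw [← hr, ← Λ.src_of_vertex lam h0, Λ.rng_src, Λ.src_of_vertex lam h0]
          apply hmax i _ (by rwa [Λ.src_of_vertex lam h0, hlamv])
          rw [h0, zero_add]
        have hwv : Λ.IsVertex (Λ.src lam) := Λ.deg_src lam
        have hsumlt : (∑ j, (n - Pi.single i 1 : Fin k → ℕ) j) < N := by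
          rw [← hn]
          apply Finset.sum_lt_sum (fun j _ => by simp [tsub_le_self])
          refine ⟨i, Finset.mem_univ i, ?_⟩
          simp only [Pi.sub_apply, Pi.single_eq_same]
          omega
        obtain ⟨mu, ⟨hmr, hmle, hmmax⟩, hmuH⟩ :=
          ih _ hsumlt (Λ.src lam) hwv hlamH (n - Pi.single i 1) rfl
        have hsrc : Λ.src lam = Λ.rng mu := hmr.symm
        refine ⟨Λ.comp lam mu, ⟨?_, ?_, ?_⟩, ?_⟩
        · rw [Λ.rng_comp lam mu hsrc, hr]
        · rw [Λ.deg_comp lam mu hsrc, hdeg]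
          intro j
          have h1 := hmle j
          simp only [Pi.sub_apply] at h1
          simp only [Pi.add_apply]
          by_cases hji : j = i
          · subst hji
            simp only [Pi.single_eq_same] at h1 ⊢
            omega
          · simp only [Pi.single_eq_of_ne hji] at h1 ⊢
            omega
        · intro j hj
          rw [Λ.src_comp lam mu hsrc]
          apply hmmax j
          rw [Λ.deg_comp lam mu hsrc, hdeg] at hj
          intro l
          have h1 := hj l
          simp only [Pi.add_apply, Pi.sub_apply] at h1 ⊢
          by_cases hli : l = i
          · subst hli
            simp only [Pi.single_eq_same] at h1 ⊢
            omega
          · simp only [Pi.single_eq_of_ne hli] at h1 ⊢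
            omega
        · rw [Λ.src_comp lam mu hsrc]
          exact hmuH
      · push_neg at hI
        refine ⟨v, ⟨hrngv, ?_, ?_⟩, ?_⟩
        · rw [hv]; intro j; simp
        · intro j hj
          rw [Λ.src_of_vertex v hv]
          apply hI j
          have hv0 : Λ.deg v = 0 := hv
          have := hj j
          simp only [Pi.add_apply, Pi.single_eq_same, hv0, Pi.zero_apply, zero_add] at this
          exact this
        · rwa [Λ.src_of_vertex v hv]
  · intro h v hv hex
    by_contra hvH
    obtain ⟨i, hi⟩ := hex
    exact h v hv hvH (Pi.single i 1) hi
end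

section
/- Let Λ be a row-finite, locally convex k-graph. If Λ is cofinal (for all v, w ∈ Λ⁰ there exists n ∈ ℕ^k with s(wΛ^{≤n}) ⊆ s(vΛ)), then Λ⁰ contains no nontrivial hereditary saturated subset: if H ⊆ Λ⁰ is nonempty, hereditary (s(HΛ) ⊆ H) and saturated, then H = Λ⁰. -/
open scoped Classical

namespace KGraphAux

lemma single_same {k : ℕ} (i : Fin k) : (Pi.single i 1 : Fin k → ℕ) i = 1 :=
  Pi.single_eq_same i 1

lemma single_ne {k : ℕ} {i l : Fin k} (h : l ≠ i) :
    (Pi.single i 1 : Fin k → ℕ) l = 0 :=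
  Pi.single_eq_of_ne h 1

lemma vertex_rng {k : ℕ} {Λ : KGraph k} {w : Λ.Path} (h : Λ.IsVertex w) :
    Λ.rng w = w := by
  have hs := Λ.src_of_vertex w h
  calc Λ.rng w = Λ.rng (Λ.src w) := by rw [hs]
  _ = Λ.src w := Λ.rng_src w
  _ = w := hs

lemma hasOut_rng {k : ℕ} {Λ : KGraph k} {ν : Λ.Path} {i : Fin k}
    (h : Λ.HasOut (Λ.src ν) i) : Λ.HasOut (Λ.rng ν) i := by
  obtain ⟨g, hg, hdg⟩ := h
  have hcomp : Λ.src ν = Λ.rng g := hg.symm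
  have hdeg : Λ.deg (Λ.comp ν g) = Pi.single i 1 + Λ.deg ν := by
    rw [Λ.deg_comp ν g hcomp, hdg, add_comm]
  obtain ⟨p, q, hpq, hdp, hdq, hc⟩ := Λ.factor_exists _ _ _ hdeg
  refine ⟨p, ?_, hdp⟩
  rw [← Λ.rng_comp p q hpq, hc, Λ.rng_comp ν g hcomp]

lemma le_single_cases {k : ℕ} {d : Fin k → ℕ} {i : Fin k}
    (h : d ≤ Pi.single i 1) : d = 0 ∨ d = Pi.single i 1 := by
  by_cases hi : d i = 0
  · left
    funext l
    show d l = 0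
    have hl : d l ≤ (Pi.single i 1 : Fin k → ℕ) l := h l
    by_cases he : l = i
    · rw [he]; exact hi
    · rw [single_ne he] at hl
      omega
  · right
    funext l
    have hl : d l ≤ (Pi.single i 1 : Fin k → ℕ) l := h l
    by_cases he : l = i
    · rw [he] at hl ⊢
      rw [single_same] at hl ⊢
      omega
    · rw [single_ne he] at hl ⊢
      omega

lemma mem_of_le {k : ℕ} (Λ : KGraph k) (H : Set Λ.Path)
    (hher : Λ.Hereditary H) (hsat : Λ.Saturated H) :
    ∀ (N : ℕ) (n : Fin k → ℕ), (∑ i, n i) = N → ∀ w, Λ.IsVertex w →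
      (∀ lam, Λ.InLe w n lam → Λ.src lam ∈ H) → w ∈ H := by
  intro N
  induction N using Nat.strong_induction_on with
  | _ N IH =>
    intro n hn w hw hcov
    by_cases h0 : n = 0
    · subst h0
      have hin : Λ.InLe w 0 w := by
        refine ⟨vertex_rng hw, le_of_eq hw, ?_⟩
        intro i hi
        have := hi i
        simp [hw] at this
      have := hcov w hin
      rwa [Λ.src_of_vertex w hw] at this
    · obtain ⟨i, hi⟩ : ∃ i, 0 < n i := by
        by_contra hc
        push_neg at hc
        exact h0 (funext fun i => Nat.le_zero.mp (hc i))
      set n' : Fin k → ℕ := n - Pi.single i 1 with hn'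
      have hn'a : ∀ l, n' l = n l - (Pi.single i 1 : Fin k → ℕ) l :=
        fun l => rfl
      have hsum' : (∑ j, n' j) < N := by
        rw [← hn]
        apply Finset.sum_lt_sum
        · intro l _
          rw [hn'a l]; omega
        · refine ⟨i, Finset.mem_univ i, ?_⟩
          rw [hn'a i, single_same]; omega
      by_cases hout : Λ.HasOut w i
      · -- every μ ∈ wΛ^{≤e_i} has degree e_i, and its source is in H by IH
        apply hsat w hw
        refine ⟨i, ?_⟩
        rintro μ ⟨hrμ, hdμ, hminμ⟩
        rcases le_single_cases hdμ with hdz | hdeq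
        · exfalso
          have hμw : μ = w := by
            have h1 : Λ.rng μ = μ := vertex_rng hdz
            rw [← h1, hrμ]
          have := hminμ i (by rw [hdz, zero_add])
          rw [Λ.src_of_vertex μ hdz, hμw] at this
          exact this hout
        · have hvs : Λ.IsVertex (Λ.src μ) := Λ.deg_src μ
          apply IH _ hsum' n' rfl (Λ.src μ) hvs
          rintro ν ⟨hrν, hdν, hminν⟩
          have hcν : Λ.src μ = Λ.rng ν := hrν.symm
          have hsrc : Λ.src (Λ.comp μ ν) = Λ.src ν := Λ.src_comp μ ν hcν
          have hdc : Λ.deg (Λ.comp μ ν) = Pi.single i 1 + Λ.deg ν := by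
            rw [Λ.deg_comp μ ν hcν, hdeq]
          rw [← hsrc]
          apply hcov
          refine ⟨by rw [Λ.rng_comp μ ν hcν, hrμ], ?_, ?_⟩
          · intro l
            show Λ.deg (Λ.comp μ ν) l ≤ n l
            have h1 : Λ.deg ν l ≤ n' l := hdν l
            rw [hn'a l] at h1
            rw [hdc]
            simp only [Pi.add_apply]
            by_cases hl : l = i
            · rw [hl] at h1 ⊢
              rw [single_same] at h1 ⊢
              omega
            · rw [single_ne hl] at h1 ⊢
              omega
          · intro j hj
            rw [hsrc]
            apply hminν j
            intro l
            show (Λ.deg ν + Pi.single j 1 : Fin k → ℕ) l ≤ n' l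
            have h1 : (Λ.deg (Λ.comp μ ν) + Pi.single j 1 : Fin k → ℕ) l ≤ n l := hj l
            rw [hdc] at h1
            rw [hn'a l]
            simp only [Pi.add_apply] at h1 ⊢
            by_cases hl : l = i
            · rw [hl] at h1 ⊢
              rw [single_same] at h1 ⊢
              omega
            · rw [single_ne hl] at h1 ⊢
              omega
      · -- ¬ HasOut w i : apply IH at w with n'
        apply IH _ hsum' n' rfl w hw
        rintro ν ⟨hrν, hdν, hminν⟩
        apply hcov
        refine ⟨hrν, ?_, ?_⟩
        · intro l
          show Λ.deg ν l ≤ n l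
          have h1 : Λ.deg ν l ≤ n' l := hdν l
          rw [hn'a l] at h1
          by_cases hl : l = i
          · rw [hl] at h1 ⊢
            rw [single_same] at h1
            omega
          · rw [single_ne hl] at h1
            omega
        · intro j hj
          by_cases hji : j = i
          · subst hji
            intro hHO
            exact hout (by rw [← hrν]; exact hasOut_rng hHO)
          · apply hminν j
            intro l
            have h1 : (Λ.deg ν + Pi.single j 1 : Fin k → ℕ) l ≤ n l := hj l
            have h2 : Λ.deg ν l ≤ n' l := hdν l
            rw [hn'a l] at h2
            rw [hn'a l]
            simp only [Pi.add_apply] at h1 ⊢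
            by_cases hl : l = i
            · rw [hl] at h1 h2 ⊢
              rw [single_same] at h2 ⊢
              rw [single_ne (Ne.symm hji)] at h1 ⊢
              omega
            · rw [single_ne hl] at h2 ⊢
              omega

end KGraphAux

/-- A cofinal row-finite locally convex k-graph has no nontrivial hereditary
saturated subsets of `Λ⁰`. -/
theorem cofinal_no_hereditary_saturated {k : ℕ} (Λ : KGraph k)
    (hrf : Λ.RowFinite) (hlc : Λ.LocallyConvex) (hcof : Λ.Cofinal)
    (H : Set Λ.Path) (hH : ∀ v ∈ H, Λ.IsVertex v) (hne : H.Nonempty)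
    (hher : Λ.Hereditary H) (hsat : Λ.Saturated H) :
    H = {v | Λ.IsVertex v} := by
  ext w
  simp only [Set.mem_setOf_eq]
  constructor
  · exact fun h => hH w h
  · intro hw
    obtain ⟨v, hv⟩ := hne
    obtain ⟨n, hns⟩ := hcof v w (hH v hv) hw
    refine KGraphAux.mem_of_le Λ H hher hsat (∑ i, n i) n rfl w hw ?_
    intro lam hlam
    obtain ⟨μ, hrμ, hsμ⟩ := hns lam hlam
    have : Λ.src μ ∈ H := hher μ (by rw [hrμ]; exact hv)
    rwa [hsμ] at this
end

section
/- Let Λ be a finite, locally convex k-graph with no cycle with an entrance, let μ be an initial cycle, and let v be a vertex on μ (so v = μ(p) for some p ≤ d(μ)). Then there exist paths ι_v, τ_v ∈ Λ with μ = ι_v τ_v, s(ι_v) = v = r(τ_v); moreover the path μ_v := τ_v ι_v satisfies r(μ_v) = s(μ_v), and r(μ_v)Λ^{e_i} = ∅ whenever d(μ_v)_i = 0. -/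
open scoped Classical

/-- If `Λ` is finite, locally convex, with no cycle with an entrance, `μ` is an
initial cycle and `v = μ(p)` is a vertex on `μ`, then `μ = ι_v τ_v` with
`s(ι_v) = v = r(τ_v)`, and `μ_v := τ_v ι_v` satisfies `r(μ_v) = s(μ_v)` and
`r(μ_v)Λ^{e_i} = ∅` whenever `d(μ_v)_i = 0`. -/
theorem initial_cycle_rotate {k : ℕ} (Λ : KGraph k) (hfin : Λ.FinitePaths)
    (hlc : Λ.LocallyConvex) (hnc : Λ.NoCycleWithEntrance)
    (mu : Λ.Path) (hmu : Λ.IsInitialCycle mu)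
    (v : Λ.Path) (p : Fin k → ℕ) (hp : p ≤ Λ.deg mu) (hv : v = Λ.vertexAt mu p) :
    ∃ ι τ : Λ.Path, Λ.src ι = Λ.rng τ ∧ Λ.comp ι τ = mu ∧ Λ.src ι = v ∧ Λ.rng τ = v ∧
      Λ.rng (Λ.comp τ ι) = Λ.src (Λ.comp τ ι) ∧
      ∀ i, Λ.deg (Λ.comp τ ι) i = 0 → ¬ Λ.HasOut (Λ.rng (Λ.comp τ ι)) i := by
  obtain ⟨hsrc, hdι, hdτ, hcomp⟩ :
      Λ.src (Λ.front mu p) = Λ.rng (Λ.back mu p) ∧ Λ.deg (Λ.front mu p) = p ∧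
      Λ.deg (Λ.back mu p) = Λ.deg mu - p ∧ Λ.comp (Λ.front mu p) (Λ.back mu p) = mu := by
    unfold KGraph.front KGraph.back KGraph.split
    rw [dif_pos hp]
    have hd : Λ.deg mu = p + (Λ.deg mu - p) := by
      funext i
      have h2 : p i ≤ Λ.deg mu i := hp i
      simp only [Pi.add_apply, Pi.sub_apply]
      omega
    exact (Λ.factor_exists mu p (Λ.deg mu - p) hd).choose_spec.choose_spec
  set ι := Λ.front mu p with hι
  set τ := Λ.back mu p with hτ
  have hv' : Λ.rng τ = v := by rw [hv]; rfl
  have hrι : Λ.rng ι = Λ.rng mu := by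
    conv_rhs => rw [← hcomp]
    rw [Λ.rng_comp _ _ hsrc]
  have hsτ : Λ.src τ = Λ.rng ι := by
    have : Λ.src τ = Λ.src mu := by
      conv_rhs => rw [← hcomp]
      rw [Λ.src_comp _ _ hsrc]
    rw [this, hrι, hmu.1]
  have hrng2 : Λ.rng (Λ.comp τ ι) = v := by rw [Λ.rng_comp _ _ hsτ, hv']
  have hsrc2 : Λ.src (Λ.comp τ ι) = v := by rw [Λ.src_comp _ _ hsτ, hsrc, hv']
  refine ⟨ι, τ, hsrc, hcomp, hsrc.trans hv', hv', hrng2.trans hsrc2.symm, ?_⟩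
  intro i hdi hout
  have hdti : Λ.deg (Λ.comp τ ι) = Λ.deg τ + Λ.deg ι := Λ.deg_comp _ _ hsτ
  have hdmui : Λ.deg mu i = 0 := by
    have h1 : Λ.deg τ i + Λ.deg ι i = 0 := by
      have := congrFun hdti i; simp only [Pi.add_apply] at this; omega
    have := hp i
    rw [hdι] at h1
    have := congrFun hdτ i
    simp only [Pi.sub_apply] at this
    omega
  obtain ⟨f, hf, hdf⟩ := hout
  rw [hrng2] at hf
  have hsf : Λ.src ι = Λ.rng f := by rw [hf, hsrc, hv']
  have hdcf : Λ.deg (Λ.comp ι f) = Pi.single i 1 + p := by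
    rw [Λ.deg_comp _ _ hsf, hdι, hdf, add_comm]
  obtain ⟨g, h, hgh, hdg, hdh, hghc⟩ := Λ.factor_exists (Λ.comp ι f) (Pi.single i 1) p hdcf
  refine hmu.2 i hdmui ⟨g, ?_, hdg⟩
  have : Λ.rng (Λ.comp g h) = Λ.rng (Λ.comp ι f) := by rw [hghc]
  rw [Λ.rng_comp _ _ hgh, Λ.rng_comp _ _ hsf, hrι] at this
  exact this
end

section
/- Let Λ be a finite, locally convex k-graph with no cycle with an entrance, let μ be an initial cycle and v a vertex on μ. If n ≤ d(μ) and λ ∈ vΛ^{≤ n}, then λ = μ_v(0, d(λ)), where μ_v is the cycle based at v obtained by cyclically rotating μ. In particular, for each n ≤ d(μ), the set vΛ^{≤ n} has exactly one element. -/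
open scoped Classical

namespace KGraph

variable {k : ℕ} (Λ : KGraph k)

lemma rng_eq_self_of_vertex {q : Λ.Path} (h : Λ.deg q = 0) : Λ.rng q = q := by
  have h1 : Λ.comp (Λ.rng q) q = Λ.comp q (Λ.src q) := by
    rw [Λ.comp_id, Λ.id_comp]
  exact (Λ.factor_unique (Λ.rng q) q q (Λ.src q)
    (by rw [Λ.src_rng]) (by rw [Λ.rng_src])
    (by rw [Λ.deg_rng, h]) (by rw [Λ.deg_src, h]) h1).1

lemma split_spec {lam : Λ.Path} {m : Fin k → ℕ} (h : m ≤ Λ.deg lam) :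
    Λ.src (Λ.front lam m) = Λ.rng (Λ.back lam m) ∧
    Λ.deg (Λ.front lam m) = m ∧
    Λ.deg (Λ.back lam m) = Λ.deg lam - m ∧
    Λ.comp (Λ.front lam m) (Λ.back lam m) = lam := by
  have hd : Λ.deg lam = m + (Λ.deg lam - m) := by
    funext i
    have hi : m i ≤ Λ.deg lam i := h i
    simp only [Pi.add_apply, Pi.sub_apply]
    omega
  unfold front back split
  rw [dif_pos h]
  exact (Λ.factor_exists lam m (Λ.deg lam - m) hd).choose_spec.choose_spec

lemma factor_eq {lam a b : Λ.Path} (h : Λ.src a = Λ.rng b) (hc : Λ.comp a b = lam) :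
    a = Λ.front lam (Λ.deg a) ∧ b = Λ.back lam (Λ.deg a) := by
  have hdeg : Λ.deg lam = Λ.deg a + Λ.deg b := by rw [← hc, Λ.deg_comp a b h]
  have hle : Λ.deg a ≤ Λ.deg lam := by
    rw [Pi.le_def]
    intro i
    have := congrFun hdeg i
    simp only [Pi.add_apply] at this
    omega
  obtain ⟨h1, h2, h3, h4⟩ := Λ.split_spec hle
  have hb : Λ.deg b = Λ.deg lam - Λ.deg a := by
    funext i
    have := congrFun hdeg i
    simp only [Pi.add_apply] at this
    simp only [Pi.sub_apply]
    omega
  exact Λ.factor_unique a b (Λ.front lam (Λ.deg a)) (Λ.back lam (Λ.deg a))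
    h h1 h2.symm (by rw [h3, hb]) (by rw [hc, h4])

lemma front_comp {a b : Λ.Path} (h : Λ.src a = Λ.rng b) {m : Fin k → ℕ}
    (hm : m ≤ Λ.deg a) : Λ.front (Λ.comp a b) m = Λ.front a m := by
  obtain ⟨h1, h2, h3, h4⟩ := Λ.split_spec hm
  have hsb : Λ.src a = Λ.src (Λ.back a m) := by
    have := Λ.src_comp _ _ h1; rw [h4] at this; exact this
  have hsrc : Λ.src (Λ.back a m) = Λ.rng b := hsb.symm.trans h
  have hc : Λ.comp a b = Λ.comp (Λ.front a m) (Λ.comp (Λ.back a m) b) := by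
    rw [← Λ.comp_assoc _ _ _ h1 hsrc, h4]
  have hr : Λ.src (Λ.front a m) = Λ.rng (Λ.comp (Λ.back a m) b) := by
    rw [Λ.rng_comp _ _ hsrc]; exact h1
  have := (Λ.factor_eq hr hc.symm).1
  rw [h2] at this
  exact this.symm

lemma front_zero (lam : Λ.Path) : Λ.front lam 0 = Λ.rng lam := by
  have := (Λ.factor_eq (Λ.src_rng lam) (Λ.id_comp lam)).1
  rw [Λ.deg_rng] at this
  exact this.symm

lemma rng_cpow {lam : Λ.Path} (hc : Λ.rng lam = Λ.src lam) (n : ℕ) :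
    Λ.rng (Λ.cpow lam n) = Λ.rng lam := by
  induction n with
  | zero => exact Λ.rng_rng lam
  | succ n ih =>
    have hcomp : Λ.src lam = Λ.rng (Λ.cpow lam n) := by rw [ih, hc]
    show Λ.rng (Λ.comp lam (Λ.cpow lam n)) = _
    rw [Λ.rng_comp _ _ hcomp]

lemma infSeg_eq_front {lam : Λ.Path} (hc : Λ.rng lam = Λ.src lam) {m : Fin k → ℕ}
    (hm : m ≤ Λ.deg lam) : Λ.infSeg lam m = Λ.front lam m := by
  have hcomp : Λ.src lam = Λ.rng (Λ.cpow lam (Finset.univ.sup m)) := by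
    rw [Λ.rng_cpow hc, hc]
  show Λ.front (Λ.comp lam (Λ.cpow lam (Finset.univ.sup m))) m = _
  exact Λ.front_comp hcomp hm

end KGraph

/-- If `μ` is an initial cycle in a finite locally convex k-graph with no cycle with
an entrance, `v = μ(p)` is a vertex on `μ` and `μ_v = τ_v ι_v` is the rotation of `μ`
at `v`, then every `λ ∈ vΛ^{≤n}` with `n ≤ d(μ)` equals `μ_v(0, d(λ))`; in particular
`vΛ^{≤n}` has exactly one element. -/
theorem initial_cycle_unique_paths {k : ℕ} (Λ : KGraph k) (hfin : Λ.FinitePaths)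
    (hlc : Λ.LocallyConvex) (hnc : Λ.NoCycleWithEntrance)
    (mu : Λ.Path) (hmu : Λ.IsInitialCycle mu)
    (v : Λ.Path) (p : Fin k → ℕ) (hp : p ≤ Λ.deg mu) (hv : v = Λ.vertexAt mu p) :
    (∀ n : Fin k → ℕ, n ≤ Λ.deg mu → ∀ lam, Λ.InLe v n lam →
      lam = Λ.front (Λ.comp (Λ.back mu p) (Λ.front mu p)) (Λ.deg lam)) ∧
    (∀ n : Fin k → ℕ, n ≤ Λ.deg mu → ∃! lam, Λ.InLe v n lam) := by
  obtain ⟨hmu1, _⟩ := hmu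
  obtain ⟨hfb, hdf, hdb, hcfb⟩ := Λ.split_spec hp
  have hv' : v = Λ.rng (Λ.back mu p) := hv
  set muv := Λ.comp (Λ.back mu p) (Λ.front mu p) with hmuv
  have hsb : Λ.src mu = Λ.src (Λ.back mu p) := by
    have := Λ.src_comp _ _ hfb; rw [hcfb] at this; exact this
  have hrf : Λ.rng mu = Λ.rng (Λ.front mu p) := by
    have := Λ.rng_comp _ _ hfb; rw [hcfb] at this; exact this
  have hcv : Λ.src (Λ.back mu p) = Λ.rng (Λ.front mu p) :=
    hsb.symm.trans (hmu1.symm.trans hrf)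
  have hrng_muv : Λ.rng muv = v := by
    rw [hmuv, Λ.rng_comp _ _ hcv]; exact hv'.symm
  have hsrc_muv : Λ.src muv = v := by
    rw [hmuv, Λ.src_comp _ _ hcv, hfb]; exact hv'.symm
  have hdeg_muv : Λ.deg muv = Λ.deg mu := by
    rw [hmuv, Λ.deg_comp _ _ hcv, hdb, hdf]
    funext i
    simp only [Pi.add_apply, Pi.sub_apply]
    have := Pi.le_def.mp hp i
    omega
  have hcyc_muv : Λ.rng muv = Λ.src muv := hrng_muv.trans hsrc_muv.symm
  have key : ∀ n : Fin k → ℕ, n ≤ Λ.deg mu → ∀ lam, Λ.InLe v n lam →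
      lam = Λ.front muv (Λ.deg lam) := by
    intro n hn lam hlam
    obtain ⟨hr, hd, _⟩ := hlam
    have hdlam : Λ.deg lam ≤ Λ.deg mu := hd.trans hn
    by_cases hdeg0 : Λ.deg mu = 0
    · have hl0 : Λ.deg lam = 0 := by
        funext i
        have h1 := Pi.le_def.mp hdlam i
        rw [hdeg0] at h1
        simpa using h1
      rw [hl0, Λ.front_zero, hrng_muv]
      exact (Λ.rng_eq_self_of_vertex hl0).symm.trans hr
    · have hnotent : ¬ Λ.HasEntrance muv := fun h =>
        hnc ⟨muv, ⟨by rw [hdeg_muv]; exact hdeg0, hcyc_muv⟩, h⟩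
      have hle : Λ.LeInfDeg muv (Λ.deg lam) := by
        intro i hi
        rw [hdeg_muv] at hi
        have := Pi.le_def.mp hdlam i
        omega
      have hinf : lam = Λ.infSeg muv (Λ.deg lam) := by
        by_contra hne
        exact hnotent ⟨lam, hr.trans hrng_muv.symm, hle, hne⟩
      exact hinf.trans (Λ.infSeg_eq_front hcyc_muv (by rw [hdeg_muv]; exact hdlam))
  refine ⟨key, fun n hn => ?_⟩
  have hnle : n ≤ Λ.deg muv := by rw [hdeg_muv]; exact hn
  obtain ⟨g1, g2, g3, g4⟩ := Λ.split_spec hnle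
  have hrng0 : Λ.rng (Λ.front muv n) = v := by
    have := Λ.rng_comp _ _ g1; rw [g4] at this
    exact this.symm.trans hrng_muv
  refine ⟨Λ.front muv n, ⟨hrng0, g2.le, fun i hi => ?_⟩, fun lam hlam => ?_⟩
  · exfalso
    have h' := Pi.le_def.mp hi i
    simp only [Pi.add_apply, Pi.single_eq_same, g2] at h'
    omega
  · obtain ⟨hr, hd, hmax⟩ := hlam
    have heq := key n hn lam ⟨hr, hd, hmax⟩
    have hdn : Λ.deg lam = n := by
      by_contra hne
      have hex : ∃ i, Λ.deg lam i < n i := by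
        by_contra hall
        push_neg at hall
        exact hne (le_antisymm hd fun i => hall i)
      obtain ⟨i, hi⟩ := hex
      have hstep : Λ.deg lam + Pi.single i 1 ≤ n := by
        rw [Pi.le_def]
        intro j
        simp only [Pi.add_apply]
        rcases eq_or_ne j i with rfl | hji
        · rw [Pi.single_eq_same]; omega
        · rw [Pi.single_eq_of_ne hji]; have := Pi.le_def.mp hd j; omega
      apply hmax i hstep
      have hdl : Λ.deg lam ≤ Λ.deg muv := by rw [hdeg_muv]; exact hd.trans hn
      obtain ⟨b1, b2, b3, b4⟩ := Λ.split_spec hdl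
      rw [hdeg_muv] at b3
      have hei : Pi.single i 1 ≤ Λ.deg (Λ.back muv (Λ.deg lam)) := by
        rw [Pi.le_def]
        intro j
        rw [b3]
        simp only [Pi.sub_apply]
        rcases eq_or_ne j i with rfl | hji
        · rw [Pi.single_eq_same]; have := Pi.le_def.mp hn j; omega
        · rw [Pi.single_eq_of_ne hji]; omega
      obtain ⟨c1, c2, c3, c4⟩ := Λ.split_spec hei
      refine ⟨Λ.front (Λ.back muv (Λ.deg lam)) (Pi.single i 1), ?_, c2⟩
      have hrf2 : Λ.rng (Λ.front (Λ.back muv (Λ.deg lam)) (Pi.single i 1)) =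
          Λ.rng (Λ.back muv (Λ.deg lam)) := by
        have := Λ.rng_comp _ _ c1; rw [c4] at this; exact this.symm
      rw [hrf2]
      have hsl : Λ.src lam = Λ.rng (Λ.back muv (Λ.deg lam)) := by
        conv_lhs => rw [heq]
        exact b1
      exact hsl.symm
    rw [hdn] at heq
    exact heq
end

section
/- Let Λ be a finite, locally convex k-graph with no cycle with an entrance and let μ be an initial cycle. With N = (|Λ⁰|,…,|Λ⁰|), for λ, ν ∈ Λ^{≤N} with sources on μ, define θ_{λ,ν} = s_{λ τ_{s(λ)}} s_{ν τ_{s(ν)}}*, where τ_w denotes the segment of μ from w to s(μ). Then the θ_{λ,ν} are matrix units: θ_{λ,ν}* = θ_{ν,λ} and θ_{λ,ν} θ_{γ,η} = δ_{ν,γ} θ_{λ,η}. -/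
open scoped Classical

/-- A Cuntz–Krieger `Λ`-family in a star algebra `A`: mutually orthogonal vertex
projections, multiplicativity along composition, `s_λ* s_λ = s_{s(λ)}`, and the
Cuntz–Krieger relation `s_v = ∑_{λ ∈ vΛ^{≤n}} s_λ s_λ*`. -/
def IsCKFamily {k : ℕ} (Λ : KGraph k) {A : Type*} [Ring A] [StarRing A]
    (S : Λ.Path → A) : Prop :=
  (∀ v, Λ.IsVertex v → IsSelfAdjoint (S v) ∧ S v * S v = S v) ∧
  (∀ v w, Λ.IsVertex v → Λ.IsVertex w → v ≠ w → S v * S w = 0) ∧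
  (∀ p q, Λ.src p = Λ.rng q → S p * S q = S (Λ.comp p q)) ∧
  (∀ p, star (S p) * S p = S (Λ.src p)) ∧
  (∀ v n, Λ.IsVertex v →
    S v = ∑ᶠ (lam) (_ : Λ.InLe v n lam), S lam * star (S lam))


/-! ### Auxiliary lemmas -/

section CStarAux
variable {A : Type*} [NormedRing A] [StarRing A] [CStarRing A] [CompleteSpace A]
    [NormedAlgebra ℂ A] [StarModule ℂ A]

lemma aux_sum_star_mul_self_eq_zero {ι : Type*} (s : Finset ι) (x : ι → A)
    (h : ∑ i ∈ s, star (x i) * x i = 0) : ∀ i ∈ s, x i = 0 := by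
  letI : CStarAlgebra A := ⟨⟩
  intro j hj
  have key : ∀ t : Finset ι, IsSelfAdjoint (∑ i ∈ t, star (x i) * x i) ∧
      SpectrumRestricts (∑ i ∈ t, star (x i) * x i) ContinuousMap.realToNNReal := by
    intro t
    induction t using Finset.cons_induction with
    | empty =>
      constructor
      · simp [IsSelfAdjoint]
      · rw [Finset.sum_empty, SpectrumRestricts.nnreal_iff]
        intro r hr
        rcases subsingleton_or_nontrivial A with hA | hA
        · rw [spectrum.of_subsingleton] at hr; exact absurd hr (Set.notMem_empty r)
        · rw [spectrum.zero_eq] at hr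
          simp only [Set.mem_singleton_iff] at hr
          exact hr.ge
    | cons a t ha ih =>
      rw [Finset.sum_cons]
      exact ⟨(IsSelfAdjoint.star_mul_self _).add ih.1,
        SpectrumRestricts.nnreal_add (IsSelfAdjoint.star_mul_self _) ih.1
          ((SpectrumRestricts.nnreal_iff).mpr spectrum_star_mul_self_nonneg) ih.2⟩
  have hsplit : star (x j) * x j + ∑ i ∈ s.erase j, star (x i) * x i = 0 := by
    rw [← Finset.add_sum_erase s (fun i => star (x i) * x i) hj] at h; exact h
  have hneg : -(star (x j) * x j) = ∑ i ∈ s.erase j, star (x i) * x i :=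
    neg_eq_of_add_eq_zero_right hsplit
  have h0 : star (x j) * x j = 0 :=
    SpectrumRestricts.eq_zero_of_neg (IsSelfAdjoint.star_mul_self _)
      ((SpectrumRestricts.nnreal_iff).mpr spectrum_star_mul_self_nonneg)
      (hneg ▸ (key (s.erase j)).2)
  exact (CStarRing.star_mul_self_eq_zero_iff _).mp h0

end CStarAux

namespace KGraph

variable {k : ℕ} {Λ : KGraph k}

lemma aux_finite_inle (hfin : Λ.FinitePaths) (v : Λ.Path) (n : Fin k → ℕ) :
    {lam | Λ.InLe v n lam}.Finite := by
  have h1 : {m : Fin k → ℕ | m ≤ n}.Finite := by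
    apply Set.Finite.subset (Set.Finite.pi (fun i : Fin k => Set.finite_Iic (n i)))
    intro m hm
    simp only [Set.mem_pi, Set.mem_univ, Set.mem_Iic, forall_true_left]
    exact fun i => hm i
  have h2 : {lam | Λ.InLe v n lam} ⊆
      ⋃ m ∈ {m : Fin k → ℕ | m ≤ n}, {lam | Λ.deg lam = m} := by
    intro lam hlam
    exact Set.mem_biUnion hlam.2.1 rfl
  exact (h1.biUnion (fun m _ => hfin m)).subset h2

lemma aux_split_spec (lam : Λ.Path) (m : Fin k → ℕ) (h : m ≤ Λ.deg lam) :
    Λ.src (Λ.front lam m) = Λ.rng (Λ.back lam m) ∧ Λ.deg (Λ.front lam m) = m ∧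
      Λ.comp (Λ.front lam m) (Λ.back lam m) = lam := by
  have hd : Λ.deg lam = m + (Λ.deg lam - m) := by
    funext i
    have hmi : m i ≤ Λ.deg lam i := h i
    simp only [Pi.add_apply, Pi.sub_apply]
    omega
  rw [front, back, split, dif_pos h]
  obtain ⟨hsr, hd1, hd2, hc⟩ :=
    (Λ.factor_exists lam m (Λ.deg lam - m) hd).choose_spec.choose_spec
  exact ⟨hsr, hd1, hc⟩

lemma aux_src_back (lam : Λ.Path) (m : Fin k → ℕ) (h : m ≤ Λ.deg lam) :
    Λ.src (Λ.back lam m) = Λ.src lam := by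
  obtain ⟨hsr, _, hc⟩ := aux_split_spec lam m h
  conv_rhs => rw [← hc]
  rw [Λ.src_comp _ _ hsr]

/-- An edge out of `Λ.src x` in direction `i` contradicts the boundary condition. -/
lemma aux_no_ext (x α : Λ.Path) (i : Fin k) (N : Fin k → ℕ)
    (hx : Λ.InLe (Λ.rng x) N x) (hsr : Λ.src x = Λ.rng α)
    (hαi : 1 ≤ Λ.deg α i) (hNi : Λ.deg x i + 1 ≤ N i) : False := by
  have hfac : Λ.deg α = Pi.single i 1 + (Λ.deg α - Pi.single i 1) := by
    funext j
    by_cases hj : j = i <;>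
      simp [hj, Pi.single_apply] <;> omega
  obtain ⟨f, g, hfg, hdf, hdg, hcomp⟩ := Λ.factor_exists α _ _ hfac
  have hout : Λ.HasOut (Λ.src x) i := by
    refine ⟨f, ?_, hdf⟩
    rw [hsr, ← hcomp, Λ.rng_comp f g hfg]
  refine hx.2.2 i ?_ hout
  intro j
  have hb := hx.2.1 j
  by_cases hj : j = i
  · subst hj; simpa [Pi.single_apply] using hNi
  · simpa [Pi.single_apply, hj] using hb

/-- Two distinct paths in `Λ^{≤N}` have no common extension. -/
lemma aux_eq_of_common_ext (N : Fin k → ℕ) (ν γ α β : Λ.Path)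
    (hν : Λ.InLe (Λ.rng ν) N ν) (hγ : Λ.InLe (Λ.rng γ) N γ)
    (hνα : Λ.src ν = Λ.rng α) (hγβ : Λ.src γ = Λ.rng β)
    (h : Λ.comp ν α = Λ.comp γ β) : ν = γ := by
  have hdeg : Λ.deg ν + Λ.deg α = Λ.deg γ + Λ.deg β := by
    rw [← Λ.deg_comp ν α hνα, ← Λ.deg_comp γ β hγβ, h]
  by_cases hd : Λ.deg ν = Λ.deg γ
  · have hd2 : Λ.deg α = Λ.deg β := by
      funext i
      have h1 := congrFun hdeg i
      have h2 := congrFun hd i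
      simp only [Pi.add_apply] at h1
      omega
    exact (Λ.factor_unique ν α γ β hνα hγβ hd hd2 h).1
  · exfalso
    have hex : ∃ i, Λ.deg ν i ≠ Λ.deg γ i := by
      by_contra hc
      push_neg at hc
      exact hd (funext hc)
    obtain ⟨i, hi⟩ := hex
    have h1 := congrFun hdeg i
    simp only [Pi.add_apply] at h1
    have hγN : Λ.deg γ i ≤ N i := hγ.2.1 i
    have hνN : Λ.deg ν i ≤ N i := hν.2.1 i
    rcases lt_or_gt_of_ne hi with hlt | hgt
    · exact aux_no_ext ν α i N hν hνα (by omega) (by omega)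
    · exact aux_no_ext γ β i N hγ hγβ (by omega) (by omega)

lemma aux_inle_comp (p ρ : Λ.Path) (s : Fin k → ℕ) (hp : Λ.deg p ≤ s)
    (hρ : Λ.InLe (Λ.src p) (fun i => s i - Λ.deg p i) ρ) :
    Λ.InLe (Λ.rng p) s (Λ.comp p ρ) := by
  have hpr : Λ.src p = Λ.rng ρ := hρ.1.symm
  refine ⟨Λ.rng_comp p ρ hpr, ?_, ?_⟩
  · intro j
    have h0 : Λ.deg (Λ.comp p ρ) j = Λ.deg p j + Λ.deg ρ j := by
      rw [Λ.deg_comp p ρ hpr]; rfl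
    have h1 : Λ.deg ρ j ≤ s j - Λ.deg p j := hρ.2.1 j
    have h2 : Λ.deg p j ≤ s j := hp j
    show Λ.deg (Λ.comp p ρ) j ≤ s j
    omega
  · intro i hi
    rw [Λ.src_comp p ρ hpr]
    refine hρ.2.2 i ?_
    intro j
    have hj : Λ.deg (Λ.comp p ρ) j + (Pi.single i 1 : Fin k → ℕ) j ≤ s j := hi j
    have h0 : Λ.deg (Λ.comp p ρ) j = Λ.deg p j + Λ.deg ρ j := by
      rw [Λ.deg_comp p ρ hpr]; rfl
    have h2 : Λ.deg p j ≤ s j := hp j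
    show Λ.deg ρ j + (Pi.single i 1 : Fin k → ℕ) j ≤ s j - Λ.deg p j
    omega

section WithFamily

variable {A : Type*} [NormedRing A] [StarRing A] [CStarRing A] [CompleteSpace A]
    [NormedAlgebra ℂ A] [StarModule ℂ A]
variable {S : Λ.Path → A}

lemma aux_S_mul_src (hS : IsCKFamily Λ S) (p : Λ.Path) : S p * S (Λ.src p) = S p := by
  rw [hS.2.2.1 p (Λ.src p) (Λ.rng_src p).symm, Λ.comp_id]

lemma aux_rng_mul_S (hS : IsCKFamily Λ S) (p : Λ.Path) : S (Λ.rng p) * S p = S p := by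
  rw [hS.2.2.1 (Λ.rng p) p (Λ.src_rng p), Λ.id_comp]

lemma aux_src_mul_starS (hS : IsCKFamily Λ S) (p : Λ.Path) :
    S (Λ.src p) * star (S p) = star (S p) := by
  have h := congrArg star (aux_S_mul_src hS p)
  rwa [star_mul, (hS.1 (Λ.src p) (Λ.deg_src p)).1.star_eq] at h

lemma aux_starS_mul_rng (hS : IsCKFamily Λ S) (p : Λ.Path) :
    star (S p) * S (Λ.rng p) = star (S p) := by
  have h := congrArg star (aux_rng_mul_S hS p)
  rwa [star_mul, (hS.1 (Λ.rng p) (Λ.deg_rng p)).1.star_eq] at h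

lemma aux_ck_finset (hfin : Λ.FinitePaths) (hS : IsCKFamily Λ S) (v : Λ.Path)
    (hv : Λ.IsVertex v) (n : Fin k → ℕ) :
    S v = ∑ ρ ∈ (aux_finite_inle hfin v n).toFinset, S ρ * star (S ρ) := by
  rw [hS.2.2.2.2 v n hv]
  exact finsum_mem_eq_finite_toFinset_sum _ _

/-- Orthogonality of the range projections of distinct paths in `vΛ^{≤n}`. -/
lemma aux_orth (hfin : Λ.FinitePaths) (hS : IsCKFamily Λ S) (v : Λ.Path) (n : Fin k → ℕ)
    (α β : Λ.Path) (hv : Λ.IsVertex v) (hα : Λ.InLe v n α) (hβ : Λ.InLe v n β)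
    (hne : α ≠ β) : star (S α) * S β = 0 := by
  obtain ⟨hproj, horth, hmul, hstar, hck⟩ := hS
  have hS' : IsCKFamily Λ S := ⟨hproj, horth, hmul, hstar, hck⟩
  set T := (aux_finite_inle hfin v n).toFinset with hT
  have hmem : ∀ ρ, ρ ∈ T ↔ Λ.InLe v n ρ := fun ρ =>
    Set.Finite.mem_toFinset (aux_finite_inle hfin v n)
  set P : Λ.Path → A := fun ρ => S ρ * star (S ρ) with hP
  have hPstar : ∀ ρ, star (P ρ) = P ρ := by
    intro ρ; simp only [hP, star_mul, star_star]
  have hPidem : ∀ ρ, P ρ * P ρ = P ρ := by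
    intro ρ
    simp only [hP]
    rw [mul_assoc, ← mul_assoc (star (S ρ)), hstar, aux_src_mul_starS hS']
  have hSv : ∀ ρ, Λ.InLe v n ρ → S v * S ρ = S ρ := by
    intro ρ hρ
    have h1 : Λ.src v = Λ.rng ρ := by rw [Λ.src_of_vertex v hv, hρ.1]
    rw [hmul v ρ h1]
    conv_lhs => rw [← hρ.1, Λ.id_comp]
  have hPv : ∀ ρ, Λ.InLe v n ρ → P ρ * S v = P ρ := by
    intro ρ hρ
    have h1 : star (S ρ) * S v = star (S ρ) := by
      have := congrArg star (hSv ρ hρ)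
      rwa [star_mul, (hproj v hv).1.star_eq] at this
    simp only [hP]
    rw [mul_assoc, h1]
  have hsum : S v = ∑ ρ ∈ T, P ρ := aux_ck_finset hfin hS' v hv n
  have hαT : α ∈ T := (hmem α).mpr hα
  have hkey : P α = ∑ ρ ∈ T, P α * P ρ * P α := by
    have h1 : P α * S v * P α = ∑ ρ ∈ T, P α * P ρ * P α := by
      rw [hsum, Finset.mul_sum, Finset.sum_mul]
    rw [← h1, hPv α hα, hPidem α]
  have hzero : ∑ ρ ∈ T.erase α, P α * P ρ * P α = 0 := by
    have h1 : P α = P α * P α * P α + ∑ ρ ∈ T.erase α, P α * P ρ * P α := by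
      rw [Finset.add_sum_erase T (fun ρ => P α * P ρ * P α) hαT]
      exact hkey
    rw [hPidem, hPidem] at h1
    exact left_eq_add.mp h1
  have hzero' : ∑ ρ ∈ T.erase α, star (P ρ * P α) * (P ρ * P α) = 0 := by
    rw [← hzero]
    refine Finset.sum_congr rfl fun ρ _ => ?_
    rw [star_mul, hPstar, hPstar]
    calc P α * P ρ * (P ρ * P α) = P α * (P ρ * P ρ) * P α := by
          simp only [mul_assoc]
      _ = P α * P ρ * P α := by rw [hPidem]
  have hβer : β ∈ T.erase α := Finset.mem_erase.mpr ⟨hne.symm, (hmem β).mpr hβ⟩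
  have hPβα : P β * P α = 0 :=
    aux_sum_star_mul_self_eq_zero _ (fun ρ => P ρ * P α) hzero' β hβer
  have hPαβ : P α * P β = 0 := by
    have := congrArg star hPβα
    rwa [star_mul, hPstar, hPstar, star_zero] at this
  have expand : star (S α) * (P α * P β) * S β = star (S α) * S β := by
    simp only [hP]
    simp only [mul_assoc]
    rw [hstar β, aux_S_mul_src hS' β, ← mul_assoc (star (S α)) (S α), hstar α,
      ← mul_assoc, aux_src_mul_starS hS' α]
  rw [← expand, hPαβ, mul_zero, zero_mul]

lemma aux_expand (hfin : Λ.FinitePaths) (hS : IsCKFamily Λ S) (p : Λ.Path) (n : Fin k → ℕ) :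
    S p = ∑ ρ ∈ (aux_finite_inle hfin (Λ.src p) n).toFinset, S (Λ.comp p ρ) * star (S ρ) := by
  have hv : Λ.IsVertex (Λ.src p) := Λ.deg_src p
  calc S p = S p * S (Λ.src p) := (aux_S_mul_src hS p).symm
    _ = ∑ ρ ∈ (aux_finite_inle hfin (Λ.src p) n).toFinset, S p * (S ρ * star (S ρ)) := by
        rw [aux_ck_finset hfin hS (Λ.src p) hv n, Finset.mul_sum]
    _ = ∑ ρ ∈ (aux_finite_inle hfin (Λ.src p) n).toFinset,
          S (Λ.comp p ρ) * star (S ρ) := by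
        refine Finset.sum_congr rfl fun ρ hρ => ?_
        have hρ' : Λ.InLe (Λ.src p) n ρ :=
          (Set.Finite.mem_toFinset (aux_finite_inle hfin (Λ.src p) n)).mp hρ
        rw [← mul_assoc, hS.2.2.1 p ρ hρ'.1.symm]

/-- If `p` and `q` have the same range and no common extension then `s_p^* s_q = 0`. -/
lemma aux_no_common_ext_zero (hfin : Λ.FinitePaths) (hS : IsCKFamily Λ S)
    (p q : Λ.Path) (hr : Λ.rng p = Λ.rng q)
    (hno : ∀ ρ σ, Λ.rng ρ = Λ.src p → Λ.rng σ = Λ.src q → Λ.comp p ρ ≠ Λ.comp q σ) :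
    star (S p) * S q = 0 := by
  set s : Fin k → ℕ := fun i => max (Λ.deg p i) (Λ.deg q i) with hs
  have hsp : Λ.deg p ≤ s := fun i => le_max_left _ _
  have hsq : Λ.deg q ≤ s := fun i => le_max_right _ _
  rw [aux_expand hfin hS p (fun i => s i - Λ.deg p i),
    aux_expand hfin hS q (fun i => s i - Λ.deg q i), star_sum, Finset.sum_mul]
  refine Finset.sum_eq_zero fun ρ hρ => ?_
  rw [Finset.mul_sum]
  refine Finset.sum_eq_zero fun σ hσ => ?_
  have hρ' : Λ.InLe (Λ.src p) (fun i => s i - Λ.deg p i) ρ :=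
    (Set.Finite.mem_toFinset (aux_finite_inle hfin (Λ.src p) _)).mp hρ
  have hσ' : Λ.InLe (Λ.src q) (fun i => s i - Λ.deg q i) σ :=
    (Set.Finite.mem_toFinset (aux_finite_inle hfin (Λ.src q) _)).mp hσ
  have hαIn : Λ.InLe (Λ.rng p) s (Λ.comp p ρ) := aux_inle_comp p ρ s hsp hρ'
  have hβIn : Λ.InLe (Λ.rng p) s (Λ.comp q σ) := by
    rw [hr]; exact aux_inle_comp q σ s hsq hσ'
  have hne : Λ.comp p ρ ≠ Λ.comp q σ := hno ρ σ hρ'.1 hσ'.1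
  have hmid : star (S (Λ.comp p ρ)) * S (Λ.comp q σ) = 0 :=
    aux_orth hfin hS (Λ.rng p) s _ _ (Λ.deg_rng p) hαIn hβIn hne
  rw [star_mul, star_star, mul_assoc, ← mul_assoc (star (S (Λ.comp p ρ))), hmid,
    zero_mul, mul_zero]

end WithFamily

end KGraph

/-- For an initial cycle `μ` with `N = (|Λ⁰|,…,|Λ⁰|)` and `τ_w = μ(p, d(μ))` the
segment of `μ` from `w = μ(p)` to `s(μ)`, the elements
`θ_{λ,ν} = s_{λ τ_{s(λ)}} s_{ν τ_{s(ν)}}*` for `λ, ν ∈ Λ^{≤N}(μ^∞)⁰`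
are matrix units: `θ_{λ,ν}* = θ_{ν,λ}` and `θ_{λ,ν} θ_{γ,η} = δ_{ν,γ} θ_{λ,η}`. -/
theorem theta_matrix_units {k : ℕ} (Λ : KGraph k) (hfin : Λ.FinitePaths)
    (hlc : Λ.LocallyConvex) (hnc : Λ.NoCycleWithEntrance)
    (mu : Λ.Path) (hmu : Λ.IsInitialCycle mu)
    {A : Type*} [NormedRing A] [StarRing A] [CStarRing A] [CompleteSpace A]
    [NormedAlgebra ℂ A] [StarModule ℂ A]
    (S : Λ.Path → A) (hS : IsCKFamily Λ S)
    (tau : Λ.Path → Λ.Path)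
    (htau : ∀ w, Λ.OnCycle mu w → ∃ p : Fin k → ℕ, p ≤ Λ.deg mu ∧
      w = Λ.vertexAt mu p ∧ tau w = Λ.back mu p)
    (N : Fin k → ℕ) (hN : N = fun _ => {v | Λ.IsVertex v}.ncard)
    (theta : Λ.Path → Λ.Path → A)
    (htheta : ∀ lam nu, theta lam nu =
      S (Λ.comp lam (tau (Λ.src lam))) * star (S (Λ.comp nu (tau (Λ.src nu))))) :
    ∀ lam nu gam eta : Λ.Path,
      Λ.InLe (Λ.rng lam) N lam → Λ.OnCycle mu (Λ.src lam) →
      Λ.InLe (Λ.rng nu) N nu → Λ.OnCycle mu (Λ.src nu) →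
      Λ.InLe (Λ.rng gam) N gam → Λ.OnCycle mu (Λ.src gam) →
      Λ.InLe (Λ.rng eta) N eta → Λ.OnCycle mu (Λ.src eta) →
      star (theta lam nu) = theta nu lam ∧
      theta lam nu * theta gam eta = if nu = gam then theta lam eta else 0 := by
  intro lam nu gam eta hlam hlamc hnu hnuc hgam hgamc heta hetac
  obtain ⟨hproj, horth, hmul, hstar, hck⟩ := hS
  have hS' : IsCKFamily Λ S := ⟨hproj, horth, hmul, hstar, hck⟩
  have htf : ∀ x : Λ.Path, Λ.OnCycle mu (Λ.src x) →
      Λ.rng (tau (Λ.src x)) = Λ.src x ∧ Λ.src (tau (Λ.src x)) = Λ.src mu := by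
    intro x hx
    obtain ⟨p, hp, hw, ht⟩ := htau (Λ.src x) hx
    constructor
    · rw [ht]; exact hw.symm
    · rw [ht]; exact KGraph.aux_src_back mu p hp
  have hsrca : ∀ x : Λ.Path, Λ.OnCycle mu (Λ.src x) →
      Λ.src (Λ.comp x (tau (Λ.src x))) = Λ.src mu := by
    intro x hx
    rw [Λ.src_comp x _ (htf x hx).1.symm]
    exact (htf x hx).2
  have hrnga : ∀ x : Λ.Path, Λ.OnCycle mu (Λ.src x) →
      Λ.rng (Λ.comp x (tau (Λ.src x))) = Λ.rng x := by
    intro x hx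
    exact Λ.rng_comp x _ (htf x hx).1.symm
  constructor
  · rw [htheta, htheta, star_mul, star_star]
  · rw [htheta lam nu, htheta gam eta, htheta lam eta]
    by_cases hng : nu = gam
    · subst hng
      rw [if_pos rfl]
      simp only [mul_assoc]
      rw [← mul_assoc (star (S (Λ.comp nu (tau (Λ.src nu))))), hstar]
      have hss : Λ.src (Λ.comp nu (tau (Λ.src nu))) =
          Λ.src (Λ.comp lam (tau (Λ.src lam))) := by
        rw [hsrca nu hnuc, hsrca lam hlamc]
      rw [hss, ← mul_assoc, KGraph.aux_S_mul_src hS']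
    · rw [if_neg hng]
      have hkey : star (S (Λ.comp nu (tau (Λ.src nu)))) *
          S (Λ.comp gam (tau (Λ.src gam))) = 0 := by
        by_cases hr : Λ.rng nu = Λ.rng gam
        · refine KGraph.aux_no_common_ext_zero hfin hS' _ _ ?_ ?_
          · rw [hrnga nu hnuc, hrnga gam hgamc, hr]
          · intro ρ σ hρ hσ hc
            have h1ν : Λ.src nu = Λ.rng (tau (Λ.src nu)) := (htf nu hnuc).1.symm
            have h1γ : Λ.src gam = Λ.rng (tau (Λ.src gam)) := (htf gam hgamc).1.symm
            have hρ' : Λ.src (tau (Λ.src nu)) = Λ.rng ρ := by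
              rw [hρ, Λ.src_comp nu _ h1ν]
            have hσ' : Λ.src (tau (Λ.src gam)) = Λ.rng σ := by
              rw [hσ, Λ.src_comp gam _ h1γ]
            have ha1 : Λ.comp (Λ.comp nu (tau (Λ.src nu))) ρ =
                Λ.comp nu (Λ.comp (tau (Λ.src nu)) ρ) := Λ.comp_assoc _ _ _ h1ν hρ'
            have ha2 : Λ.comp (Λ.comp gam (tau (Λ.src gam))) σ =
                Λ.comp gam (Λ.comp (tau (Λ.src gam)) σ) := Λ.comp_assoc _ _ _ h1γ hσ'
            have hcommon : Λ.comp nu (Λ.comp (tau (Λ.src nu)) ρ) =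
                Λ.comp gam (Λ.comp (tau (Λ.src gam)) σ) := by
              rw [← ha1, ← ha2, hc]
            have hr1 : Λ.src nu = Λ.rng (Λ.comp (tau (Λ.src nu)) ρ) := by
              rw [Λ.rng_comp _ _ hρ']; exact h1ν
            have hr2 : Λ.src gam = Λ.rng (Λ.comp (tau (Λ.src gam)) σ) := by
              rw [Λ.rng_comp _ _ hσ']; exact h1γ
            exact hng (KGraph.aux_eq_of_common_ext N nu gam _ _ hnu hgam hr1 hr2 hcommon)
        · have h2 : star (S (Λ.comp nu (tau (Λ.src nu)))) * S (Λ.rng nu) =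
              star (S (Λ.comp nu (tau (Λ.src nu)))) := by
            have := KGraph.aux_starS_mul_rng hS' (Λ.comp nu (tau (Λ.src nu)))
            rwa [hrnga nu hnuc] at this
          have h3 : S (Λ.rng gam) * S (Λ.comp gam (tau (Λ.src gam))) =
              S (Λ.comp gam (tau (Λ.src gam))) := by
            have := KGraph.aux_rng_mul_S hS' (Λ.comp gam (tau (Λ.src gam)))
            rwa [hrnga gam hgamc] at this
          calc star (S (Λ.comp nu (tau (Λ.src nu)))) * S (Λ.comp gam (tau (Λ.src gam)))
              = (star (S (Λ.comp nu (tau (Λ.src nu)))) * S (Λ.rng nu)) *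
                (S (Λ.rng gam) * S (Λ.comp gam (tau (Λ.src gam)))) := by rw [h2, h3]
            _ = star (S (Λ.comp nu (tau (Λ.src nu)))) * (S (Λ.rng nu) * S (Λ.rng gam)) *
                S (Λ.comp gam (tau (Λ.src gam))) := by simp only [mul_assoc]
            _ = 0 := by
                rw [horth (Λ.rng nu) (Λ.rng gam) (Λ.deg_rng nu) (Λ.deg_rng gam) hr,
                  mul_zero, zero_mul]
      rw [mul_assoc, ← mul_assoc (star (S (Λ.comp nu (tau (Λ.src nu))))), hkey,
        zero_mul, mul_zero]
end

section
/- Let Λ be a finite, locally convex k-graph with no cycle with an entrance, and let μ be an initial cycle that is not a vertex. Define G_μ = {m − n : m, n ∈ ℕ^k, m,n ≤ d(μ^∞), μ^∞(m) = μ^∞(n)} ⊆ ℤ^k. Then the rank of G_μ equals |{i ≤ k : d(μ)_i > 0}|. -/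
open scoped Classical

/-- For an initial cycle `μ` (not a vertex) in a finite locally convex k-graph with
no cycle with an entrance, the periodicity group
`G_μ = {m − n : m, n ≤ d(μ^∞), μ^∞(m) = μ^∞(n)}` has rank `|{i : d(μ)_i > 0}|`. -/
theorem periodicity_group_rank {k : ℕ} (Λ : KGraph k)
    (hfin : Λ.FinitePaths) (hlc : Λ.LocallyConvex) (hnc : Λ.NoCycleWithEntrance)
    (mu : Λ.Path) (hmu : Λ.IsInitialCycle mu) (hnv : Λ.deg mu ≠ 0)
    (G : AddSubgroup (Fin k → ℤ))
    (hG : (G : Set (Fin k → ℤ)) = {x | ∃ m n : Fin k → ℕ,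
      Λ.LeInfDeg mu m ∧ Λ.LeInfDeg mu n ∧ Λ.infVertexAt mu m = Λ.infVertexAt mu n ∧
      x = fun i => (m i : ℤ) - (n i : ℤ)}) :
    Module.finrank ℤ (AddSubgroup.toIntSubmodule G) =
      (Finset.univ.filter fun i => 0 < Λ.deg mu i).card := by
 classical
  set S := Finset.univ.filter fun i => 0 < Λ.deg mu i with hS
  set W := AddSubgroup.toIntSubmodule G with hW
  have hmem : ∀ x : Fin k → ℤ, x ∈ G ↔ ∃ m n : Fin k → ℕ,
      Λ.LeInfDeg mu m ∧ Λ.LeInfDeg mu n ∧ Λ.infVertexAt mu m = Λ.infVertexAt mu n ∧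
      x = fun i => (m i : ℤ) - (n i : ℤ) := by
    intro x
    constructor
    · intro hx
      have : x ∈ (G : Set (Fin k → ℤ)) := hx
      rw [hG] at this
      exact this
    · intro hx
      have : x ∈ (G : Set (Fin k → ℤ)) := by rw [hG]; exact hx
      exact this
  -- elements of G vanish off S
  have hvanish : ∀ x ∈ G, ∀ i : Fin k, i ∉ S → x i = 0 := by
    intro x hx i hi
    rcases (hmem x).1 hx with ⟨m, n, hm, hn, _, rfl⟩
    have hdi : Λ.deg mu i = 0 := by
      by_contra h
      exact hi (Finset.mem_filter.2 ⟨Finset.mem_univ i, Nat.pos_of_ne_zero h⟩)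
    simp [hm i hdi, hn i hdi]
  -- vertices are finite
  have hvfin : {lam : Λ.Path | Λ.deg lam = 0}.Finite := hfin 0
  -- upper bound
  have hub : Module.finrank ℤ W ≤ S.card := by
    have hinj : Function.Injective
        ((LinearMap.funLeft ℤ ℤ (fun i : S => (i : Fin k))).comp W.subtype) := by
      rw [← LinearMap.ker_eq_bot, LinearMap.ker_eq_bot']
      intro ⟨x, hx⟩ hx0
      apply Subtype.ext
      funext i
      show x i = 0
      by_cases hi : i ∈ S
      · exact congrFun hx0 ⟨i, hi⟩
      · exact hvanish x hx i hi
    have := LinearMap.finrank_le_finrank_of_injective hinj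
    simpa [Module.finrank_pi] using this
  -- lower bound: for each i ∈ S produce a diagonal element
  have hdiag : ∀ i : Fin k, i ∈ S → ∃ x ∈ G, 0 < x i ∧ ∀ j, j ≠ i → x j = 0 := by
    intro i hi
    have hdi : Λ.deg mu i ≠ 0 := (Finset.mem_filter.1 hi).2.ne'
    -- the map N ↦ μ^∞(N e_i) lands in the finite set of vertices
    have hmaps : Set.MapsTo (fun N : ℕ => Λ.infVertexAt mu (Pi.single i N))
        Set.univ {lam : Λ.Path | Λ.deg lam = 0} := by
      intro N _
      simp only [Set.mem_setOf_eq, KGraph.infVertexAt, KGraph.vertexAt]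
      exact Λ.deg_rng _
    obtain ⟨N, -, N', -, hNe, hEq⟩ :=
      Set.infinite_univ.exists_ne_map_eq_of_mapsTo hmaps hvfin
    have hle : ∀ M : ℕ, Λ.LeInfDeg mu (Pi.single i M) := by
      intro M j hj
      have hne : j ≠ i := fun h => hdi (h ▸ hj)
      simp [Pi.single_apply, hne]
    rcases hNe.lt_or_gt with hlt | hlt
    · refine ⟨fun j => ((Pi.single i N' : Fin k → ℕ) j : ℤ) - ((Pi.single i N : Fin k → ℕ) j : ℤ),
        (hmem _).2 ⟨Pi.single i N', Pi.single i N, hle N', hle N, hEq.symm, rfl⟩, ?_, ?_⟩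
      · simp only [Pi.single_eq_same]; omega
      · intro j hj; simp [Pi.single_apply, hj]
    · refine ⟨fun j => ((Pi.single i N : Fin k → ℕ) j : ℤ) - ((Pi.single i N' : Fin k → ℕ) j : ℤ),
        (hmem _).2 ⟨Pi.single i N, Pi.single i N', hle N, hle N', hEq, rfl⟩, ?_, ?_⟩
      · simp only [Pi.single_eq_same]; omega
      · intro j hj; simp [Pi.single_apply, hj]
  choose! x hxG hxpos hx0 using hdiag
  -- the diagonal family in W is linearly independent
  have hli : LinearIndependent ℤ (fun i : S => (⟨x i, (hxG i i.2 : _)⟩ : W)) := by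
    apply LinearIndependent.of_comp W.subtype
    rw [Fintype.linearIndependent_iff]
    intro a ha i
    have := congrFun ha (i : Fin k)
    simp only [Finset.sum_apply, Pi.smul_apply, smul_eq_mul, Pi.zero_apply,
      Function.comp] at this
    rw [Finset.sum_eq_single i] at this
    · have hpos := hxpos i i.2
      have h2 : a i * x i i = 0 := this
      exact (mul_eq_zero.1 h2).resolve_right hpos.ne'
    · intro j _ hji
      have hne : (i : Fin k) ≠ (j : Fin k) := fun h => hji (Subtype.ext h.symm)
      show a j * x (j : Fin k) (i : Fin k) = 0
      rw [hx0 (j : Fin k) j.2 (i : Fin k) hne, mul_zero]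
    · intro h; exact absurd (Finset.mem_univ i) h
  have hlb : S.card ≤ Module.finrank ℤ W := by
    have := hli.fintype_card_le_finrank
    simpa using this
  exact le_antisymm hub hlb
end
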